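/- arXiv:1504.07763 — 3 statements merged into one kernel-verified Lean document; each statement's English description precedes it below -/
import Mathlib

section
/- Uniform Gronwall lemma: Let g, h, y be positive locally integrable real functions on [t₀, ∞) with y absolutely continuous, satisfying y'(t) ≤ g(t)y(t) + h(t) for all t ≥ t₀. Suppose there exist positive constants r, a₁, a₂, a₃ such that for all t ≥ t₀, ∫ₜ^{t+r} g ≤ a₁, ∫ₜ^{t+r} h ≤ a₂, and ∫ₜ^{t+r} y ≤ a₃. Then y(t + r) ≤ (a₃/r + a₂) · e^{a₁} for all t ≥ t₀. -/
/-!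
Gronwall's inequality holds with merely integrable coefficients: from `y' ≤ g y + h` one first
passes to the integral inequality `y ≤ w := y a + ∫ₐᵇ h + ∫ₐˣ g y`; the function `w` is absolutely
continuous with `w' ≤ g w` a.e., so `w · exp (-∫ₐˣ g)` is absolutely continuous with a.e.
nonpositive derivative, hence nonincreasing. For the uniform bound, start this estimate at a point
`s ∈ [t, t + r]` where `y` equals its mean over `[t, t + r]`, which is at most `a₃ / r`.
-/

open MeasureTheory Set Filter

open scoped NNReal

section Composition

variable {Y : Type*} [PseudoMetricSpace Y] {a b : ℝ}

theorem LipschitzOnWith.comp_absolutelyContinuousOnInterval {X : Type*} [PseudoMetricSpace X]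
    {φ : X → Y} {f : ℝ → X} {K : ℝ≥0} {s : Set X} (hφ : LipschitzOnWith K φ s)
    (hf : AbsolutelyContinuousOnInterval f a b) (hfs : MapsTo f (uIcc a b) s) :
    AbsolutelyContinuousOnInterval (φ ∘ f) a b := by
  unfold AbsolutelyContinuousOnInterval at hf ⊢
  refine squeeze_zero' (.of_forall fun _ ↦ Finset.sum_nonneg fun _ _ ↦ dist_nonneg) ?_
    (by simpa using hf.const_mul (K : ℝ))
  rw [eventually_inf_principal]
  filter_upwards with ⟨n, I⟩ hnI
  rw [Finset.mul_sum]
  gcongr with i hi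
  exact hφ.dist_le_mul _ (hfs (hnI.1 i hi).1) _ (hfs (hnI.1 i hi).2)

theorem LocallyLipschitz.comp_absolutelyContinuousOnInterval {E : Type*}
    [SeminormedAddCommGroup E] {φ : E → Y} {f : ℝ → E} (hφ : LocallyLipschitz φ)
    (hf : AbsolutelyContinuousOnInterval f a b) :
    AbsolutelyContinuousOnInterval (φ ∘ f) a b := by
  have hcompact : IsCompact (f '' uIcc a b) :=
    isCompact_uIcc.image_of_continuousOn hf.continuousOn
  obtain ⟨K, hK⟩ := hφ.locallyLipschitzOn.exists_lipschitzOnWith_of_compact hcompact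
  exact hK.comp_absolutelyContinuousOnInterval hf (mapsTo_image f _)

theorem AbsolutelyContinuousOnInterval.rexp {f : ℝ → ℝ}
    (hf : AbsolutelyContinuousOnInterval f a b) :
    AbsolutelyContinuousOnInterval (fun x ↦ Real.exp (f x)) a b :=
  Real.contDiff_exp.locallyLipschitz.comp_absolutelyContinuousOnInterval hf

end Composition

theorem AbsolutelyContinuousOnInterval.le_mul_exp_integral_of_ae_deriv_le {w g : ℝ → ℝ}
    {a b : ℝ} (hab : a ≤ b) (hw : AbsolutelyContinuousOnInterval w a b)
    (hg : IntervalIntegrable g volume a b) (hw' : ∀ᵐ x, x ∈ Icc a b → deriv w x ≤ g x * w x) :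
    w b ≤ w a * Real.exp (∫ x in a..b, g x) := by
  set G : ℝ → ℝ := fun x ↦ ∫ t in a..x, g t
  set F : ℝ → ℝ := fun x ↦ w x * Real.exp (-G x)
  have hF : AbsolutelyContinuousOnInterval F a b :=
    hw.fun_mul (hg.absolutelyContinuousOnInterval_intervalIntegral left_mem_uIcc).fun_neg.rexp
  have hF' : ∀ᵐ x, x ∈ Icc a b → deriv F x ≤ 0 := by
    filter_upwards [hw.ae_differentiableAt, hg.ae_hasDerivAt_integral, hw'] with x hwx hGx hx hxab
    rw [← uIcc_of_le hab] at hxab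
    have hexp : HasDerivAt (fun x ↦ Real.exp (-G x)) (-g x * Real.exp (-G x)) x := by
      simpa [mul_comm] using (hGx hxab a left_mem_uIcc).neg.exp
    rw [((hwx hxab).hasDerivAt.fun_mul hexp).deriv]
    nlinarith [hx (uIcc_of_le hab ▸ hxab), Real.exp_pos (-G x)]
  have hFab : F b ≤ F a := by
    have hint : 0 ≤ ∫ x in a..b, -deriv F x :=
      intervalIntegral.integral_nonneg_of_ae_restrict hab <|
        (ae_restrict_iff' measurableSet_Icc).mpr <| hF'.mono fun x hx hxab ↦ neg_nonneg.2 (hx hxab)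
    rw [intervalIntegral.integral_neg, hF.integral_deriv_eq_sub] at hint
    linarith
  have hFa : F a = w a := by simp [F, G]
  calc w b = F b * Real.exp (G b) := by simp [F, mul_assoc, ← Real.exp_add]
    _ ≤ w a * Real.exp (G b) := by gcongr; exact hFa ▸ hFab

theorem le_mul_exp_integral_of_deriv_right_le_mul_add {g h y y' : ℝ → ℝ} {a b : ℝ}
    (hab : a ≤ b) (hg : ∀ x ∈ Icc a b, 0 ≤ g x) (hh : ∀ x ∈ Icc a b, 0 ≤ h x)
    (hgi : IntervalIntegrable g volume a b) (hhi : IntervalIntegrable h volume a b)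
    (hy : ContinuousOn y (Icc a b)) (hy' : ∀ x ∈ Ioo a b, HasDerivWithinAt y (y' x) (Ioi x) x)
    (hbound : ∀ x ∈ Ioo a b, y' x ≤ g x * y x + h x) :
    y b ≤ (y a + ∫ x in a..b, h x) * Real.exp (∫ x in a..b, g x) := by
  have hgy : IntervalIntegrable (fun x ↦ g x * y x) volume a b :=
    hgi.mul_continuousOn (uIcc_of_le hab ▸ hy)
  -- `y` need not be absolutely continuous, so the comparison function is built from `∫ g y`.
  set w : ℝ → ℝ := fun x ↦ (y a + ∫ t in a..b, h t) + ∫ t in a..x, g t * y t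
  have hyw : ∀ x ∈ Icc a b, y x ≤ w x := by
    intro x hx
    have hsub : uIcc a x ⊆ uIcc a b := uIcc_subset_uIcc left_mem_uIcc (Icc_subset_uIcc hx)
    have hFTC : y x - y a ≤ ∫ t in a..x, g t * y t + h t :=
      intervalIntegral.sub_le_integral_of_hasDeriv_right_of_le hx.1
        (hy.mono (Icc_subset_Icc_right hx.2)) (fun t ht ↦ hy' t ⟨ht.1, ht.2.trans_le hx.2⟩)
        ((intervalIntegrable_iff_integrableOn_Icc_of_le hx.1).1
          ((hgy.mono_set hsub).add (hhi.mono_set hsub)))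
        (fun t ht ↦ hbound t ⟨ht.1, ht.2.trans_le hx.2⟩)
    have hhx : ∫ t in a..x, h t ≤ ∫ t in a..b, h t :=
      intervalIntegral.integral_mono_interval le_rfl hx.1 hx.2
        ((ae_restrict_iff' measurableSet_Ioc).mpr <| .of_forall fun t ht ↦
          hh t (Ioc_subset_Icc_self ht)) hhi
    rw [intervalIntegral.integral_add (hgy.mono_set hsub) (hhi.mono_set hsub)] at hFTC
    simp only [w]
    linarith
  have hw : AbsolutelyContinuousOnInterval w a b :=
    (LipschitzWith.const _).lipschitzOnWith.absolutelyContinuousOnInterval.fun_add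
      (hgy.absolutelyContinuousOnInterval_intervalIntegral left_mem_uIcc)
  have hw' : ∀ᵐ x, x ∈ Icc a b → deriv w x ≤ g x * w x := by
    filter_upwards [hgy.ae_hasDerivAt_integral] with x hx hxab
    rw [((hx (Icc_subset_uIcc hxab) a left_mem_uIcc).const_add _).deriv]
    exact mul_le_mul_of_nonneg_left (hyw x hxab) (hg x hxab)
  calc y b ≤ w b := hyw b (right_mem_Icc.2 hab)
    _ ≤ w a * Real.exp (∫ x in a..b, g x) := hw.le_mul_exp_integral_of_ae_deriv_le hab hgi hw'
    _ = (y a + ∫ x in a..b, h x) * Real.exp (∫ x in a..b, g x) := by simp [w]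

theorem uniform_gronwall_general (t₀ r a₁ a₂ a₃ : ℝ) (g h y y' : ℝ → ℝ)
    (hr : 0 < r) (ha₂ : 0 < a₂) (ha₃ : 0 < a₃)
    (hg : ∀ t, t₀ ≤ t → 0 < g t) (hh : ∀ t, t₀ ≤ t → 0 < h t)
    (hgint : ∀ t, t₀ ≤ t → IntervalIntegrable g MeasureTheory.volume t (t + r))
    (hhint : ∀ t, t₀ ≤ t → IntervalIntegrable h MeasureTheory.volume t (t + r))
    (hderiv : ∀ t, t₀ ≤ t → HasDerivAt y (y' t) t)
    (hdiff : ∀ t, t₀ ≤ t → y' t ≤ g t * y t + h t)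
    (hIg : ∀ t, t₀ ≤ t → (∫ s in t..t + r, g s) ≤ a₁)
    (hIh : ∀ t, t₀ ≤ t → (∫ s in t..t + r, h s) ≤ a₂)
    (hIy : ∀ t, t₀ ≤ t → (∫ s in t..t + r, y s) ≤ a₃) :
    ∀ t, t₀ ≤ t → y (t + r) ≤ (a₃ / r + a₂) * Real.exp a₁ := by
  intro t ht
  have htr : t < t + r := lt_add_of_pos_right t hr
  have hmem : ∀ u ∈ Icc t (t + r), t₀ ≤ u := fun u hu ↦ ht.trans hu.1
  have hyc : ContinuousOn y (Icc t (t + r)) :=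
    fun u hu ↦ (hderiv u (hmem u hu)).continuousAt.continuousWithinAt
  obtain ⟨s, hs, hys⟩ := exists_eq_interval_average htr.ne (uIcc_of_le htr.le ▸ hyc)
  rw [interval_average_eq_div, add_sub_cancel_left] at hys
  replace hs : s ∈ Icc t (t + r) := Ioo_subset_Icc_self (uIoo_of_le htr.le ▸ hs)
  have hIcc : Icc s (t + r) ⊆ Icc t (t + r) := Icc_subset_Icc_left hs.1
  have huIcc : uIcc s (t + r) ⊆ uIcc t (t + r) :=
    uIcc_subset_uIcc (Icc_subset_uIcc hs) right_mem_uIcc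
  have hinterval : ∀ f : ℝ → ℝ, (∀ u, t₀ ≤ u → 0 < f u) →
      IntervalIntegrable f volume t (t + r) → ∫ u in s..t + r, f u ≤ ∫ u in t..t + r, f u :=
    fun f hf hfi ↦ intervalIntegral.integral_mono_interval hs.1 hs.2 le_rfl
      ((ae_restrict_iff' measurableSet_Ioc).mpr <| .of_forall fun u hu ↦
        (hf u (hmem u (Ioc_subset_Icc_self hu))).le) hfi
  calc y (t + r) ≤ (y s + ∫ u in s..t + r, h u) * Real.exp (∫ u in s..t + r, g u) :=
        le_mul_exp_integral_of_deriv_right_le_mul_add hs.2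
          (fun u hu ↦ (hg u (hmem u (hIcc hu))).le) (fun u hu ↦ (hh u (hmem u (hIcc hu))).le)
          ((hgint t ht).mono_set huIcc) ((hhint t ht).mono_set huIcc) (hyc.mono hIcc)
          (fun u hu ↦ (hderiv u (hmem u (hIcc (Ioo_subset_Icc_self hu)))).hasDerivWithinAt)
          (fun u hu ↦ hdiff u (hmem u (hIcc (Ioo_subset_Icc_self hu))))
    _ ≤ (a₃ / r + a₂) * Real.exp a₁ := by
      gcongr
      · exact hys ▸ div_le_div_of_nonneg_right (hIy t ht) hr.le
      · exact (hinterval h hh (hhint t ht)).trans (hIh t ht)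
      · exact (hinterval g hg (hgint t ht)).trans (hIg t ht)

/-- Uniform Gronwall lemma. -/
theorem uniform_gronwall (t₀ r a₁ a₂ a₃ : ℝ) (g h y y' : ℝ → ℝ)
    (hr : 0 < r) (ha₁ : 0 < a₁) (ha₂ : 0 < a₂) (ha₃ : 0 < a₃)
    (hg : ∀ t, t₀ ≤ t → 0 < g t) (hh : ∀ t, t₀ ≤ t → 0 < h t) (hy : ∀ t, t₀ ≤ t → 0 < y t)
    (hgint : ∀ t, t₀ ≤ t → IntervalIntegrable g MeasureTheory.volume t (t + r))
    (hhint : ∀ t, t₀ ≤ t → IntervalIntegrable h MeasureTheory.volume t (t + r))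
    (hyint : ∀ t, t₀ ≤ t → IntervalIntegrable y MeasureTheory.volume t (t + r))
    (hderiv : ∀ t, t₀ ≤ t → HasDerivAt y (y' t) t)
    (hdiff : ∀ t, t₀ ≤ t → y' t ≤ g t * y t + h t)
    (hIg : ∀ t, t₀ ≤ t → (∫ s in t..t + r, g s) ≤ a₁)
    (hIh : ∀ t, t₀ ≤ t → (∫ s in t..t + r, h s) ≤ a₂)
    (hIy : ∀ t, t₀ ≤ t → (∫ s in t..t + r, y s) ≤ a₃) :
    ∀ t, t₀ ≤ t → y (t + r) ≤ (a₃ / r + a₂) * Real.exp a₁ :=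
  uniform_gronwall_general t₀ r a₁ a₂ a₃ g h y y' hr ha₂ ha₃ hg hh hgint hhint hderiv hdiff hIg hIh
    hIy
end

section
/- Vanishing of the antisymmetric coupling contribution: Let δ : Fin n → Fin n → ℝ be an antisymmetric matrix (δ j k = −δ k j) with zero row sums (Σ_k δ j k = 0 for each j), and let u : Fin n → E be a map into a real inner product space. Setting w i j = u j − u i, one has Σ_{i,j,k} ⟨w i j, δ j k • w j k − δ i k • w i k⟩ = 0. -/
/-!
Swapping the summation indices `i` and `j` in the second half of the sum turns it into the same
kind of sum as the first half, so it suffices that `∑ j k, δ j k ⟪u j - a, u k - u j⟫ = 0` for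
every base point `a`. Writing `v = u - a`, the summand is `δ j k (⟪v j, v k⟫ - ‖v j‖²)`: the first
part pairs the antisymmetric `δ` with a symmetric kernel, the second is killed by the row sums.
-/

open Finset

open scoped RealInnerProductSpace

section

variable {ι : Type*} [Fintype ι]

theorem sum_sum_mul_eq_zero_of_antisymm_of_symm {R : Type*} [CommRing R] [NoZeroDivisors R]
    [CharZero R] {δ f : ι → ι → R} (hδ : ∀ j k, δ j k = -δ k j) (hf : ∀ j k, f j k = f k j) :
    ∑ j, ∑ k, δ j k * f j k = 0 := by
  refine CharZero.eq_neg_self_iff.mp ?_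
  conv_lhs => rw [sum_comm]
  simp only [← sum_neg_distrib]
  refine sum_congr rfl fun j _ => sum_congr rfl fun k _ => ?_
  rw [hδ k j, hf k j, neg_mul]

theorem sum_sum_mul_inner_sub_eq_zero {E : Type*} [NormedAddCommGroup E] [InnerProductSpace ℝ E]
    {δ : ι → ι → ℝ} (hanti : ∀ j k, δ j k = -δ k j) (hrow : ∀ j, ∑ k, δ j k = 0)
    (u : ι → E) (a : E) : ∑ j, ∑ k, δ j k * ⟪u j - a, u k - u j⟫ = 0 := by
  have hsymm : ∑ j, ∑ k, δ j k * ⟪u j - a, u k - a⟫ = 0 :=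
    sum_sum_mul_eq_zero_of_antisymm_of_symm hanti fun _ _ => real_inner_comm _ _
  have hdiag : ∑ j, ∑ k, δ j k * ⟪u j - a, u j - a⟫ = 0 := by
    simp only [← sum_mul, hrow, zero_mul, sum_const_zero]
  calc ∑ j, ∑ k, δ j k * ⟪u j - a, u k - u j⟫
      = ∑ j, ∑ k, (δ j k * ⟪u j - a, u k - a⟫ - δ j k * ⟪u j - a, u j - a⟫) := by
        simp only [← mul_sub, ← inner_sub_right, sub_sub_sub_cancel_right]
    _ = 0 := by simp only [sum_sub_distrib, hsymm, hdiag, sub_zero]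

end

/-- The antisymmetric part of the coupling contributes nothing. -/
theorem antisymmetric_coupling_vanishes {E : Type*} [NormedAddCommGroup E]
    [InnerProductSpace ℝ E] (n : ℕ) (δ : Fin n → Fin n → ℝ) (u : Fin n → E)
    (hanti : ∀ j k, δ j k = -δ k j)
    (hrow : ∀ j, ∑ k, δ j k = 0) :
    ∑ i, ∑ j, ∑ k,
      (inner ℝ ((u j - u i)) (δ j k • (u k - u j) - δ i k • (u k - u i)) : ℝ) = 0 := by
  have hterm : ∀ i j k, ⟪u j - u i, δ j k • (u k - u j) - δ i k • (u k - u i)⟫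
      = δ j k * ⟪u j - u i, u k - u j⟫ - δ i k * ⟪u j - u i, u k - u i⟫ := fun i j k => by
    rw [inner_sub_right, inner_smul_right, inner_smul_right]
  have hfirst : ∑ i, ∑ j, ∑ k, δ j k * ⟪u j - u i, u k - u j⟫ = 0 :=
    sum_eq_zero fun i _ => sum_sum_mul_inner_sub_eq_zero hanti hrow u (u i)
  have hsecond : ∑ i, ∑ j, ∑ k, δ i k * ⟪u j - u i, u k - u i⟫ = 0 := by
    rw [sum_comm]
    refine sum_eq_zero fun j _ => ?_
    rw [← neg_eq_zero, ← sum_sum_mul_inner_sub_eq_zero hanti hrow u (u j)]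
    simp only [← neg_sub (u j), inner_neg_left, mul_neg, sum_neg_distrib]
  simp only [hterm, sum_sub_distrib, hfirst, hsecond, sub_zero]
end

section
/- Synchronization sufficient condition from edge condition: Let G be a finite connected graph on n nodes, and for each pair i < j let P_{ij} be a chosen path in G joining i and j of length ℓ(P_{ij}). For each edge e define α_e = Σ_{i<j : e ∈ P_{ij}} ℓ(P_{ij}). Let w : Fin n → Fin n → E with w i j = u j − u i (E a real inner product space). Then Σ_{i<j} ‖w i j‖² ≤ Σ_{edges (k,l)} α_{kl} ‖w k l‖². -/
open Finset

private lemma walk_list_bound {E : Type*} [NormedAddCommGroup E] [InnerProductSpace ℝ E]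
    {n : ℕ} (u : Fin n → E) {G : SimpleGraph (Fin n)}
    (f : Sym2 (Fin n) → ℝ)
    (hfval : ∀ k l : Fin n, f s(k, l) = ‖u l - u k‖ ^ 2) :
    ∀ {i j : Fin n} (W : G.Walk i j),
      ‖u j - u i‖ ^ 2 ≤ (W.length : ℝ) * (W.edges.map f).sum := by
  intro i j W
  induction W with
  | nil => simp
  | @cons i k j h W ih =>
    simp only [SimpleGraph.Walk.edges_cons, SimpleGraph.Walk.length_cons, List.map_cons,
      List.sum_cons, Nat.cast_add, Nat.cast_one, hfval]
    have hS : 0 ≤ (W.edges.map f).sum := by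
      apply List.sum_nonneg
      intro x hx
      obtain ⟨e, he, rfl⟩ := List.mem_map.mp hx
      induction e with
      | h p q => rw [hfval]; positivity
    have ha : ‖u j - u i‖ ≤ ‖u k - u i‖ + ‖u j - u k‖ := by
      calc ‖u j - u i‖ = ‖(u k - u i) + (u j - u k)‖ := by
            congr 1; abel
        _ ≤ _ := norm_add_le _ _
    set a := ‖u k - u i‖ with hadef
    set b := ‖u j - u k‖ with hbdef
    set m := (W.length : ℝ) with hmdef
    set S := (W.edges.map f).sum with hSdef
    have hm : (0:ℝ) ≤ m := by positivity
    have ha0 : 0 ≤ a := norm_nonneg _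
    have hb0 : 0 ≤ b := norm_nonneg _
    have h1 : ‖u j - u i‖ ^ 2 ≤ (a + b) ^ 2 := by
      apply pow_le_pow_left₀ (norm_nonneg _) ha
    have hb2 : b ^ 2 ≤ m * S := ih
    calc ‖u j - u i‖ ^ 2 ≤ (a + b) ^ 2 := h1
      _ ≤ (m + 1) * (a ^ 2 + S) := by
          rcases eq_or_lt_of_le hm with hm0 | hm0
          · have : b = 0 := by nlinarith
            nlinarith
          · nlinarith [sq_nonneg (m * a - b), mul_nonneg hm hS, mul_pos hm0 hm0,
              mul_nonneg (mul_nonneg hm ha0) hb0]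


private lemma walk_finset_bound {E : Type*} [NormedAddCommGroup E] [InnerProductSpace ℝ E]
    {n : ℕ} (u : Fin n → E) {G : SimpleGraph (Fin n)}
    (f : Sym2 (Fin n) → ℝ)
    (hfval : ∀ k l : Fin n, f s(k, l) = ‖u l - u k‖ ^ 2)
    {i j : Fin n} (W : G.Walk i j) :
    ‖u j - u i‖ ^ 2 ≤ (W.length : ℝ) * ∑ e ∈ W.edges.toFinset, f e := by
  have hf0 : ∀ e : Sym2 (Fin n), 0 ≤ f e := by
    intro e; induction e with
    | h p q => rw [hfval]; positivity
  have h1 := walk_list_bound u f hfval W.bypass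
  have hnd : W.bypass.edges.Nodup := W.bypass_isPath.isTrail.edges_nodup
  have heq : (W.bypass.edges.map f).sum = ∑ e ∈ W.bypass.edges.toFinset, f e := by
    rw [List.sum_toFinset _ hnd]
  have hsub : W.bypass.edges.toFinset ⊆ W.edges.toFinset := by
    intro e he
    simp only [List.mem_toFinset] at he ⊢
    exact W.edges_bypass_subset he
  calc ‖u j - u i‖ ^ 2 ≤ (W.bypass.length : ℝ) * (W.bypass.edges.map f).sum := h1
    _ ≤ (W.length : ℝ) * ∑ e ∈ W.edges.toFinset, f e := by
        rw [heq]
        apply mul_le_mul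
        · exact_mod_cast W.length_bypass_le
        · exact Finset.sum_le_sum_of_subset_of_nonneg hsub (fun e _ _ => hf0 e)
        · exact Finset.sum_nonneg (fun e _ => hf0 e)
        · positivity


/-- Path inequality for a connected graph: the sum of squared norms of all pairwise
differences is bounded by the edge-weighted sum, where the weight `α_e` of an edge `e`
is the sum of the lengths of the chosen paths passing through `e`. -/
theorem path_sum_inequality {E : Type*} [NormedAddCommGroup E] [InnerProductSpace ℝ E]
    (n : ℕ) (u : Fin n → E) (G : SimpleGraph (Fin n)) [DecidableRel G.Adj]
    (hconn : G.Connected) (P : ∀ i j : Fin n, G.Walk i j) :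
    ∑ p ∈ Finset.univ.filter (fun p : Fin n × Fin n => p.1 < p.2), ‖u p.2 - u p.1‖ ^ 2
      ≤ ∑ e ∈ G.edgeFinset,
          ((∑ p ∈ Finset.univ.filter
              (fun p : Fin n × Fin n => p.1 < p.2 ∧ e ∈ (P p.1 p.2).edges),
              ((P p.1 p.2).length : ℝ)) *
            Sym2.lift ⟨fun k l => ‖u l - u k‖ ^ 2, fun k l => by simp [norm_sub_rev]⟩ e) := by
  set f : Sym2 (Fin n) → ℝ :=
    Sym2.lift ⟨fun k l => ‖u l - u k‖ ^ 2, fun k l => by simp [norm_sub_rev]⟩ with hfdef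
  have hfval : ∀ k l : Fin n, f s(k, l) = ‖u l - u k‖ ^ 2 := fun k l => rfl
  have hrw : ∑ e ∈ G.edgeFinset,
      ((∑ p ∈ Finset.univ.filter
          (fun p : Fin n × Fin n => p.1 < p.2 ∧ e ∈ (P p.1 p.2).edges),
          ((P p.1 p.2).length : ℝ)) * f e)
      = ∑ p ∈ Finset.univ.filter (fun p : Fin n × Fin n => p.1 < p.2),
          ((P p.1 p.2).length : ℝ) * ∑ e ∈ (P p.1 p.2).edges.toFinset, f e := by
    have step1 : ∀ e ∈ G.edgeFinset,
        ((∑ p ∈ Finset.univ.filter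
            (fun p : Fin n × Fin n => p.1 < p.2 ∧ e ∈ (P p.1 p.2).edges),
            ((P p.1 p.2).length : ℝ)) * f e)
        = ∑ p ∈ Finset.univ.filter (fun p : Fin n × Fin n => p.1 < p.2),
            (if e ∈ (P p.1 p.2).edges then ((P p.1 p.2).length : ℝ) * f e else 0) := by
      intro e _
      rw [Finset.sum_mul, ← Finset.filter_filter, Finset.sum_filter]
    rw [Finset.sum_congr rfl step1, Finset.sum_comm]
    apply Finset.sum_congr rfl
    intro p _
    rw [← Finset.sum_filter, ← Finset.mul_sum]
    congr 1
    have : G.edgeFinset.filter (fun e => e ∈ (P p.1 p.2).edges) = (P p.1 p.2).edges.toFinset := by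
      ext e
      simp only [Finset.mem_filter, SimpleGraph.mem_edgeFinset, List.mem_toFinset]
      exact ⟨fun h => h.2, fun h => ⟨(P p.1 p.2).edges_subset_edgeSet h, h⟩⟩
    rw [this]
  rw [hrw]
  apply Finset.sum_le_sum
  intro p _
  exact walk_finset_bound u f hfval (P p.1 p.2)
end
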